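/- Let G be a finite group and let U_1, ..., U_n, V be subgroups of G such that [G:U_i] = n·r_i for 1 ≤ i ≤ n and [G:V] = n·r, where r_1, ..., r_n, r are pairwise coprime positive integers. Assume that α(U_i, V) = 1 for every 1 ≤ i ≤ n. Then the tuple (U_1, ..., U_n, V) is not harmonic; i.e. there do not exist g_1, ..., g_n, g_v ∈ G such that the cosets g_1U_1, ..., g_nU_n, g_vV are pairwise disjoint. -/

import Mathlib

open scoped Pointwise

/-- `alphaIdx A B` is the integer `α(A,B)` satisfying
`[G : A ⊓ B] = lcm([G:A],[G:B]) · α(A,B)`. -/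
noncomputable def alphaIdx {G : Type*} [Group G] (A B : Subgroup G) : ℕ :=
  (A ⊓ B).index / Nat.lcm A.index B.index

/-!
Read the cosets `g i • U i` in `G ⧸ V`. Since `α(U i, V) = 1`, `[G : U i ⊓ V] = n rᵢ r`, so
`g i • U i` meets exactly `[U i : U i ⊓ V] = r` cosets of `V`, while `[V : U i ⊓ V] = rᵢ`.
As the `rᵢ` are pairwise coprime, `V = (U i ⊓ V)(U j ⊓ V)`, so two disjoint cosets
`g i • U i` and `g j • U j` never meet a common coset of `V`. Hence together they meet
`n r = [G : V]` cosets of `V`, that is all of them, and `gv • V` cannot avoid their union.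
-/

open Set

namespace Subgroup

variable {G : Type*} [Group G]

theorem index_inf_eq_lcm_of_alphaIdx_eq_one {A B : Subgroup G} (h : alphaIdx A B = 1) :
    (A ⊓ B).index = Nat.lcm A.index B.index := by
  have hdvd : Nat.lcm A.index B.index ∣ (A ⊓ B).index :=
    Nat.lcm_dvd (index_dvd_of_le inf_le_left) (index_dvd_of_le inf_le_right)
  rw [← Nat.div_mul_cancel hdvd, ← alphaIdx, h, one_mul]

theorem relIndex_eq_index_inf_div_index (H : Subgroup G) {K : Subgroup G} (hK : K.index ≠ 0) :
    H.relIndex K = (H ⊓ K).index / K.index := by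
  have h := relIndex_inf_mul_relIndex H K ⊤
  rw [inf_top_eq, relIndex_top_right, relIndex_top_right] at h
  rw [← h, Nat.mul_div_cancel _ (Nat.pos_of_ne_zero hK)]

theorem ncard_image_mk_smul (U V : Subgroup G) (g : G) :
    (QuotientGroup.mk '' (g • (U : Set G)) : Set (G ⧸ V)).ncard = V.relIndex U := by
  have horbit :
      MulAction.orbit U (QuotientGroup.mk 1 : G ⧸ V) = QuotientGroup.mk '' (U : Set G) := by
    ext y
    change (∃ u : U, (u : G) • (QuotientGroup.mk 1 : G ⧸ V) = y) ↔ _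
    simp
  have hstab : MulAction.stabilizer U (QuotientGroup.mk 1 : G ⧸ V) = V.subgroupOf U := by
    ext u
    change (u : G) • (QuotientGroup.mk 1 : G ⧸ V) = QuotientGroup.mk 1 ↔ _
    simp [mem_subgroupOf, QuotientGroup.eq]
  rw [image_smul_comm QuotientGroup.mk g _ fun _ ↦ rfl, ncard_smul_set, ← horbit,
    ← MulAction.index_stabilizer, hstab, relIndex]

theorem exists_mul_eq_of_coprime_index [Finite G] {A B : Subgroup G}
    (h : A.index.Coprime B.index) (z : G) : ∃ a ∈ A, ∃ b ∈ B, a * b = z := by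
  have hA : 0 < A.index := Nat.pos_of_ne_zero index_ne_zero_of_finite
  have hinf : (B ⊓ A).index = B.index * A.index :=
    le_antisymm index_inf_le <| Nat.le_of_dvd (Nat.pos_of_ne_zero index_ne_zero_of_finite) <|
      h.symm.mul_dvd_of_dvd_of_dvd (index_dvd_of_le inf_le_left) (index_dvd_of_le inf_le_right)
  have hcover : (QuotientGroup.mk '' (A : Set G) : Set (G ⧸ B)) = univ := by
    refine eq_of_subset_of_ncard_le (subset_univ _) ?_ (toFinite _)
    rw [ncard_univ, ← one_smul G (A : Set G), ncard_image_mk_smul,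
      relIndex_eq_index_inf_div_index B hA.ne', hinf, Nat.mul_div_cancel _ hA, index]
  obtain ⟨a, ha, haz⟩ := hcover.symm ▸ mem_univ (QuotientGroup.mk z : G ⧸ B)
  exact ⟨a, ha, a⁻¹ * z, QuotientGroup.eq.1 haz, mul_inv_cancel_left a z⟩

theorem disjoint_image_mk_of_coprime_relIndex [Finite G] {A B V : Subgroup G}
    (h : (A.relIndex V).Coprime (B.relIndex V)) {x y : G}
    (hxy : Disjoint (x • (A : Set G)) (y • (B : Set G))) :
    Disjoint (QuotientGroup.mk '' (x • (A : Set G)) : Set (G ⧸ V))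
      (QuotientGroup.mk '' (y • (B : Set G))) := by
  refine disjoint_left.2 ?_
  rintro _ ⟨_, ⟨a, ha, rfl⟩, rfl⟩ ⟨_, ⟨b, hb, rfl⟩, hab⟩
  obtain ⟨⟨a', _⟩, ha', ⟨b', _⟩, hb', hprod⟩ := exists_mul_eq_of_coprime_index h
    ⟨(x • a)⁻¹ * (y • b), QuotientGroup.eq.1 hab.symm⟩
  replace hprod : a' * b' = (x * a)⁻¹ * (y * b) := congrArg Subtype.val hprod
  refine disjoint_left.1 hxy ⟨a * a', mul_mem ha ha', (mul_assoc x a a').symm⟩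
    ⟨b * b'⁻¹, mul_mem hb (inv_mem hb'), ?_⟩
  change y * (b * b'⁻¹) = x * a * a'
  rw [← mul_assoc, mul_inv_eq_iff_eq_mul, mul_assoc, hprod, mul_inv_cancel_left]

theorem mk_notMem_image_mk_of_disjoint {V : Subgroup G} {s : Set G} {g : G}
    (h : Disjoint s (g • (V : Set G))) : (QuotientGroup.mk g : G ⧸ V) ∉ QuotientGroup.mk '' s := by
  rintro ⟨x, hx, hxg⟩
  exact disjoint_left.1 h hx (mem_leftCoset_iff g |>.2 (QuotientGroup.eq.1 hxg.symm))

end Subgroup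

open Function in
theorem Set.iUnion_eq_univ_of_card_le_sum_ncard {X ι : Type*} [Finite X] [Fintype ι]
    {s : ι → Set X} (hdisj : Pairwise (Disjoint on s)) (hcard : Nat.card X ≤ ∑ i, (s i).ncard) :
    ⋃ i, s i = univ := by
  refine eq_of_subset_of_ncard_le (subset_univ _) ?_ (toFinite _)
  rwa [ncard_univ, ncard_iUnion_of_finite (fun _ ↦ toFinite _) hdisj, finsum_eq_sum_of_fintype]

open Subgroup in
theorem not_harmonic_of_all_alphas_one_general
    (G : Type*) [Group G] [Fintype G]
    (n : ℕ) (U : Fin n → Subgroup G) (V : Subgroup G)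
    (r : ℕ) (ri : Fin n → ℕ)
    (hUidx : ∀ i, (U i).index = n * ri i) (hVidx : V.index = n * r)
    (hcop : ∀ i j : Fin n, i ≠ j → Nat.Coprime (ri i) (ri j))
    (hcopr : ∀ i, Nat.Coprime (ri i) r)
    (halpha : ∀ i, alphaIdx (U i) V = 1) :
    ¬ ∃ (g : Fin n → G) (gv : G),
      (∀ i j : Fin n, i ≠ j →
        Disjoint (g i • (U i : Set G)) (g j • (U j : Set G))) ∧
      (∀ i : Fin n, Disjoint (g i • (U i : Set G)) (gv • (V : Set G))) := by
  rintro ⟨g, gv, hdisj, hdisjV⟩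
  have hinf (i : Fin n) : (U i ⊓ V).index = n * ri i * r := by
    rw [index_inf_eq_lcm_of_alphaIdx_eq_one (halpha i), hUidx, hVidx, Nat.lcm_mul_left,
      (hcopr i).lcm_eq_mul, mul_assoc]
  have hrelU (i : Fin n) : V.relIndex (U i) = r := by
    have hpos : 0 < n * ri i := hUidx i ▸ Nat.pos_of_ne_zero index_ne_zero_of_finite
    rw [relIndex_eq_index_inf_div_index V index_ne_zero_of_finite, inf_comm, hinf, hUidx,
      Nat.mul_div_cancel_left _ hpos]
  have hrelV (i : Fin n) : (U i).relIndex V = ri i := by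
    have hpos : 0 < n * r := hVidx ▸ Nat.pos_of_ne_zero index_ne_zero_of_finite
    rw [relIndex_eq_index_inf_div_index _ index_ne_zero_of_finite, hinf, hVidx,
      mul_right_comm, Nat.mul_div_cancel_left _ hpos]
  let T (i : Fin n) : Set (G ⧸ V) := QuotientGroup.mk '' (g i • (U i : Set G))
  have hcover : ⋃ i, T i = univ := by
    refine iUnion_eq_univ_of_card_le_sum_ncard (fun i j hij ↦ ?_) ?_
    · refine disjoint_image_mk_of_coprime_relIndex ?_ (hdisj i j hij)
      rw [hrelV, hrelV]
      exact hcop i j hij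
    · simp [T, ncard_image_mk_smul, hrelU, ← index_eq_card, hVidx]
  obtain ⟨i, hi⟩ := mem_iUnion.1 (hcover ▸ mem_univ (QuotientGroup.mk gv : G ⧸ V))
  exact mk_notMem_image_mk_of_disjoint (hdisjV i) hi

theorem not_harmonic_of_all_alphas_one
    (G : Type*) [Group G] [Fintype G]
    (n : ℕ) (U : Fin n → Subgroup G) (V : Subgroup G)
    (r : ℕ) (ri : Fin n → ℕ) (hrpos : 0 < r) (hripos : ∀ i, 0 < ri i)
    (hUidx : ∀ i, (U i).index = n * ri i) (hVidx : V.index = n * r)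
    (hcop : ∀ i j : Fin n, i ≠ j → Nat.Coprime (ri i) (ri j))
    (hcopr : ∀ i, Nat.Coprime (ri i) r)
    (halpha : ∀ i, alphaIdx (U i) V = 1) :
    ¬ ∃ (g : Fin n → G) (gv : G),
      (∀ i j : Fin n, i ≠ j →
        Disjoint (g i • (U i : Set G)) (g j • (U j : Set G))) ∧
      (∀ i : Fin n, Disjoint (g i • (U i : Set G)) (gv • (V : Set G))) :=
  not_harmonic_of_all_alphas_one_general G n U V r ri hUidx hVidx hcop hcopr halpha
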